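/- Let U be unitary on a d-dimensional Hilbert space with orthonormal basis (|C_k⟩)_{k∈Z_d}, and write z_k(p) = |⟨C_{k+p}| U^p |C_k⟩|, θ_k(p) = arccos z_k(p). Then for any k and any p ≥ 1, min{θ_k(p), π/2} ≤ Σ_{m=0}^{p-1} θ_{k+m}(1). In particular, if θ_{j}(1) ≤ ε^{1/2} for all j (where ε := 1 − (min_j z_j(1))^2 is interpreted via sin θ_j(1) ≤ ε^{1/2}), then z_k(p)^2 ≥ cos^2(p · arcsin(ε^{1/2})) whenever p · arcsin(ε^{1/2}) < π/2. -/

import Mathlib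

open Real

lemma arccos_antitone : Antitone Real.arccos := fun x y h => by
  unfold Real.arccos; exact sub_le_sub_left (Real.monotone_arcsin h) _

lemma tri {H : Type*} [NormedAddCommGroup H] [InnerProductSpace ℂ H]
    (x y w : H) (hx : ‖x‖ = 1) (hy : ‖y‖ = 1) (hw : ‖w‖ = 1) :
    Real.arccos ‖(inner ℂ x w : ℂ)‖ ≤
      Real.arccos ‖(inner ℂ x y : ℂ)‖ + Real.arccos ‖(inner ℂ y w : ℂ)‖ := by
  set a : ℝ := ‖(inner ℂ x y : ℂ)‖ with ha
  set b : ℝ := ‖(inner ℂ y w : ℂ)‖ with hb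
  have ha0 : 0 ≤ a := norm_nonneg _
  have hb0 : 0 ≤ b := norm_nonneg _
  have ha1 : a ≤ 1 := by
    calc a ≤ ‖x‖ * ‖y‖ := norm_inner_le_norm x y
    _ = 1 := by rw [hx, hy]; ring
  have hb1 : b ≤ 1 := by
    calc b ≤ ‖y‖ * ‖w‖ := norm_inner_le_norm y w
    _ = 1 := by rw [hy, hw]; ring
  set c1 : ℂ := inner ℂ y x with hc1
  set c2 : ℂ := inner ℂ y w with hc2
  have hyy : (inner ℂ y y : ℂ) = 1 := by
    rw [inner_self_eq_norm_sq_to_K, hy]; norm_num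
  have hnc1 : ‖c1‖ = a := by rw [hc1, ha, norm_inner_symm]
  have hnc2 : ‖c2‖ = b := rfl
  set x' : H := x - c1 • y with hx'
  set w' : H := w - c2 • y with hw'
  have hxy : (inner ℂ x y : ℂ) = starRingEnd ℂ c1 := (inner_conj_symm x y).symm
  have hsplit : (inner ℂ x w : ℂ) = inner ℂ x' w' + starRingEnd ℂ c1 * c2 := by
    rw [hx', hw']
    simp only [inner_sub_left, inner_sub_right, inner_smul_left, inner_smul_right,
      hyy, hxy, hc2]
    ring
  -- norms of x', w'
  have hre : ∀ c : ℂ, RCLike.re (c * starRingEnd ℂ c) = ‖c‖ ^ 2 := fun c => by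
    rw [RCLike.mul_conj]; norm_cast
  have hnx' : ‖x'‖ ^ 2 = 1 - a ^ 2 := by
    rw [hx', @norm_sub_sq ℂ, hx, norm_smul, hy, hnc1]
    have h5 : (inner ℂ x (c1 • y) : ℂ) = c1 * starRingEnd ℂ c1 := by
      rw [inner_smul_right, hxy]
    rw [h5, hre, hnc1]
    ring
  have hnw' : ‖w'‖ ^ 2 = 1 - b ^ 2 := by
    rw [hw', @norm_sub_sq ℂ, hw, norm_smul, hy, hnc2]
    have hwy : (inner ℂ w y : ℂ) = starRingEnd ℂ c2 := (inner_conj_symm w y).symm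
    have h5 : (inner ℂ w (c2 • y) : ℂ) = c2 * starRingEnd ℂ c2 := by
      rw [inner_smul_right, hwy]
    rw [h5, hre, hnc2]
    ring
  have hnx'' : ‖x'‖ = Real.sqrt (1 - a ^ 2) := by
    rw [← hnx']; exact (Real.sqrt_sq (norm_nonneg _)).symm
  have hnw'' : ‖w'‖ = Real.sqrt (1 - b ^ 2) := by
    rw [← hnw']; exact (Real.sqrt_sq (norm_nonneg _)).symm
  have hkey : a * b - Real.sqrt (1 - a ^ 2) * Real.sqrt (1 - b ^ 2) ≤ ‖(inner ℂ x w : ℂ)‖ := by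
    have h1 : ‖(inner ℂ x' w' : ℂ)‖ ≤ Real.sqrt (1 - a ^ 2) * Real.sqrt (1 - b ^ 2) := by
      rw [← hnx'', ← hnw'']; exact norm_inner_le_norm x' w'
    have h2 : ‖starRingEnd ℂ c1 * c2‖ = a * b := by
      rw [norm_mul, RCLike.norm_conj, hnc1, hnc2]
    calc a * b - Real.sqrt (1 - a ^ 2) * Real.sqrt (1 - b ^ 2)
        ≤ ‖starRingEnd ℂ c1 * c2‖ - ‖(inner ℂ x' w' : ℂ)‖ := by
          rw [h2]; linarith
      _ ≤ ‖(inner ℂ x' w' : ℂ) + starRingEnd ℂ c1 * c2‖ := by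
          have := norm_add_le_of_le (le_refl ‖(inner ℂ x' w' : ℂ)‖) (le_refl ‖starRingEnd ℂ c1 * c2‖)
          have h3 := norm_sub_norm_le (starRingEnd ℂ c1 * c2) (-(inner ℂ x' w' : ℂ))
          simp only [norm_neg, sub_neg_eq_add] at h3
          calc ‖starRingEnd ℂ c1 * c2‖ - ‖(inner ℂ x' w' : ℂ)‖
              ≤ ‖starRingEnd ℂ c1 * c2 + (inner ℂ x' w' : ℂ)‖ := h3
            _ = ‖(inner ℂ x' w' : ℂ) + starRingEnd ℂ c1 * c2‖ := by rw [add_comm]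
      _ = ‖(inner ℂ x w : ℂ)‖ := by rw [hsplit]
  set s : ℝ := Real.arccos a + Real.arccos b with hs
  have hcos : Real.cos s = a * b - Real.sqrt (1 - a ^ 2) * Real.sqrt (1 - b ^ 2) := by
    rw [hs, Real.cos_add, Real.cos_arccos (by linarith) ha1, Real.cos_arccos (by linarith) hb1,
      Real.sin_arccos, Real.sin_arccos]
  have : Real.arccos ‖(inner ℂ x w : ℂ)‖ ≤ Real.arccos (Real.cos s) := by
    apply arccos_antitone; rw [hcos]; exact hkey
  calc Real.arccos ‖(inner ℂ x w : ℂ)‖ ≤ Real.arccos (Real.cos s) := this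
    _ = s := Real.arccos_cos
        (add_nonneg (Real.arccos_nonneg _) (Real.arccos_nonneg _))
        (by
          have h1 : Real.arccos a ≤ π / 2 := Real.arccos_le_pi_div_two.2 ha0
          have h2 : Real.arccos b ≤ π / 2 := Real.arccos_le_pi_div_two.2 hb0
          rw [hs]; linarith)

set_option maxHeartbeats 1000000 in
/-- Cumulative bound on the decay of persistence amplitudes: the angle after `p` steps is
at most the sum of the one-step angles, and consequently a small one-step error `ε`
forces the persistence probability to stay above `cos²(p·arcsin √ε)`. -/
theorem stmt5 {H : Type*} [NormedAddCommGroup H] [InnerProductSpace ℂ H]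
    (d : ℕ) [NeZero d] (C : OrthonormalBasis (ZMod d) ℂ H)
    (U : H →ₗ[ℂ] H) (hU : ∀ x y : H, (inner ℂ (U x) (U y) : ℂ) = inner ℂ x y)
    (z : ZMod d → ℕ → ℝ)
    (hz : ∀ k p, z k p = ‖(inner ℂ (C (k + p)) ((U ^ p) (C k)) : ℂ)‖)
    (θ : ZMod d → ℕ → ℝ) (hθ : ∀ k p, θ k p = Real.arccos (z k p))
    (ε : ℝ) (hε : ε = 1 - (⨅ j : ZMod d, z j 1) ^ 2) :
    (∀ (k : ZMod d) (p : ℕ), 1 ≤ p →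
        min (θ k p) (Real.pi / 2) ≤ ∑ m ∈ Finset.range p, θ (k + m) 1) ∧
    ∀ (k : ZMod d) (p : ℕ),
      (p : ℝ) * Real.arcsin (Real.sqrt ε) < Real.pi / 2 →
      Real.cos ((p : ℝ) * Real.arcsin (Real.sqrt ε)) ^ 2 ≤ z k p ^ 2 := by
  have hCnorm : ∀ j : ZMod d, ‖C j‖ = 1 := fun j => C.orthonormal.1 j
  have hunit : ∀ x : H, ‖U x‖ = ‖x‖ := by
    intro x
    have h := hU x x
    rw [inner_self_eq_norm_sq_to_K, inner_self_eq_norm_sq_to_K] at h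
    have h2 : ‖U x‖ ^ 2 = ‖x‖ ^ 2 := by exact_mod_cast h
    have := congrArg Real.sqrt h2
    simpa [Real.sqrt_sq, norm_nonneg] using this
  have hUp : ∀ (p : ℕ) (x : H), ‖(U ^ p) x‖ = ‖x‖ := by
    intro p
    induction p with
    | zero => intro x; simp
    | succ n ih =>
      intro x
      rw [pow_succ', Module.End.mul_apply, hunit, ih]
  have hz0 : ∀ k p, 0 ≤ z k p := fun k p => by rw [hz]; exact norm_nonneg _
  have hz1 : ∀ k p, z k p ≤ 1 := by
    intro k p
    rw [hz]
    calc ‖(inner ℂ (C (k + p)) ((U ^ p) (C k)) : ℂ)‖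
        ≤ ‖C (k + p)‖ * ‖(U ^ p) (C k)‖ := norm_inner_le_norm _ _
      _ = 1 := by rw [hCnorm, hUp, hCnorm]; ring
  -- key cumulative angle bound, valid for all p including 0
  have key : ∀ (p : ℕ) (k : ZMod d), θ k p ≤ ∑ m ∈ Finset.range p, θ (k + m) 1 := by
    intro p
    induction p with
    | zero =>
      intro k
      have : z k 0 = 1 := by
        rw [hz]
        simp only [Nat.cast_zero, add_zero, pow_zero, Module.End.one_apply]
        rw [inner_self_eq_norm_sq_to_K, hCnorm]
        norm_num
      rw [Finset.sum_range_zero, hθ, this, Real.arccos_one]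
    | succ p ih =>
      intro k
      have hstep : θ k (p + 1) ≤ θ (k + p) 1 + θ k p := by
        have htri := tri (C (k + ((p : ℕ) + 1 : ℕ))) (U (C (k + p))) ((U ^ (p + 1)) (C k))
          (hCnorm _) (by rw [hunit]; exact hCnorm _) ((hUp _ _).trans (hCnorm _))
        have h1 : ‖(inner ℂ (U (C (k + p))) ((U ^ (p + 1)) (C k)) : ℂ)‖ = z k p := by
          rw [pow_succ', Module.End.mul_apply, hU, hz]
        have h2 : ‖(inner ℂ (C (k + ((p : ℕ) + 1 : ℕ))) (U (C (k + p))) : ℂ)‖ = z (k + p) 1 := by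
          rw [hz]
          norm_num [pow_one]
          ring_nf
        rw [h1, h2, ← hz k (p + 1)] at htri
        rw [hθ, hθ, hθ]
        exact htri
      calc θ k (p + 1) ≤ θ (k + p) 1 + θ k p := hstep
        _ ≤ θ (k + p) 1 + ∑ m ∈ Finset.range p, θ (k + m) 1 := by linarith [ih k]
        _ = ∑ m ∈ Finset.range (p + 1), θ (k + m) 1 := by
            rw [Finset.sum_range_succ]; ring
  constructor
  · intro k p _
    exact le_trans (min_le_left _ _) (key p k)
  · intro k p hp
    haveI : Nonempty (ZMod d) := ⟨0⟩
    set m : ℝ := ⨅ j : ZMod d, z j 1 with hm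
    have hbdd : BddBelow (Set.range fun j : ZMod d => z j 1) := Set.Finite.bddBelow (Set.finite_range _)
    have hm_le : ∀ j, m ≤ z j 1 := fun j => ciInf_le hbdd j
    have hm0 : 0 ≤ m := le_ciInf fun j => hz0 j 1
    have hm1 : m ≤ 1 := le_trans (hm_le 0) (hz1 0 1)
    have hA : Real.arcsin (Real.sqrt ε) = Real.arccos m := by
      rw [hε, ← Real.sin_arccos]
      exact Real.arcsin_sin
        (le_trans (by linarith [Real.pi_pos]) (Real.arccos_nonneg m))
        (Real.arccos_le_pi_div_two.2 hm0)
    have hθ1 : ∀ j : ZMod d, θ j 1 ≤ Real.arccos m := by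
      intro j
      rw [hθ]
      exact arccos_antitone (hm_le j)
    set t : ℝ := (p : ℝ) * Real.arcsin (Real.sqrt ε) with ht
    have ht0 : 0 ≤ t := by
      rw [ht, hA]
      exact mul_nonneg (Nat.cast_nonneg p) (Real.arccos_nonneg m)
    have hθt : θ k p ≤ t := by
      calc θ k p ≤ ∑ i ∈ Finset.range p, θ (k + i) 1 := key p k
        _ ≤ ∑ _i ∈ Finset.range p, Real.arccos m := Finset.sum_le_sum fun i _ => hθ1 _
        _ = (p : ℝ) * Real.arccos m := by
            rw [Finset.sum_const, Finset.card_range, nsmul_eq_mul]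
        _ = t := by rw [ht, hA]
    have hzc : Real.cos (θ k p) = z k p := by
      rw [hθ]
      exact Real.cos_arccos (by linarith [hz0 k p]) (hz1 k p)
    have hθ0 : 0 ≤ θ k p := by rw [hθ]; exact Real.arccos_nonneg _
    have hcos_le : Real.cos t ≤ z k p := by
      rw [← hzc]
      exact Real.cos_le_cos_of_nonneg_of_le_pi hθ0 (by linarith [Real.pi_pos]) hθt
    have hcos0 : 0 ≤ Real.cos t :=
      Real.cos_nonneg_of_mem_Icc ⟨by linarith [Real.pi_pos], le_of_lt hp⟩
    exact pow_le_pow_left₀ hcos0 hcos_le 2
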